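/- Σ_{n=1}^{∞} H_n² / n³ = - ∫₀¹ ∫₀¹ log(1 - (1-t)(1-u)) · (log t)(log u) / ((1-t)(1-u)) dt du, where H_n = Σ_{k=1}^n 1/k is the n-th harmonic number. -/

import Mathlib

/-!
With `z = (1 - t)(1 - u)`, the expansion `-log (1 - z) / z = ∑ zⁿ / (n + 1)` splits minus the
integrand into `∑ wₙ(t) wₙ(u) / (n + 1)` with `wₙ(t) = (1 - t)ⁿ (-log t)`. All terms are
nonnegative, so both integrations may be done termwise, and `∫₀¹ wₙ = H (n + 1) / (n + 1)`:
differentiating `(1 - (1 - t)ⁿ⁺¹) log t` gives `-(n + 1) wₙ(t)` plus the geometric sum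
`∑_{k ≤ n} (1 - t)ᵏ`, whose integral is `H (n + 1)`.
-/

open Real MeasureTheory Set intervalIntegral

/-- The n-th harmonic number `H_n = ∑_{k=1}^n 1/k`. -/
noncomputable def H (n : ℕ) : ℝ := ∑ k ∈ Finset.Icc 1 n, (1 : ℝ) / k

lemma H_eq_harmonic (n : ℕ) : H n = harmonic n := by
  simp [H, harmonic_eq_sum_Icc]

lemma H_eq_sum_range (n : ℕ) : H n = ∑ k ∈ Finset.range n, 1 / ((k : ℝ) + 1) := by
  simp [H_eq_harmonic, harmonic]

lemma H_nonneg (n : ℕ) : 0 ≤ H n :=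
  Finset.sum_nonneg fun k _ => by positivity

lemma H_le_self (n : ℕ) : H n ≤ n := by
  simpa [H] using Finset.sum_le_card_nsmul (Finset.Icc 1 n) (fun k : ℕ => (1 : ℝ) / k) 1
    fun k hk => div_le_one_of_le₀ (by exact_mod_cast (Finset.mem_Icc.mp hk).1) k.cast_nonneg

lemma H_le_two_sqrt (n : ℕ) : H n ≤ 2 * √n := by
  rcases n.eq_zero_or_pos with rfl | hn
  · simp [H]
  have hlog := log_le_sub_one_of_pos (show 0 < √(n : ℝ) by positivity)
  rw [log_sqrt n.cast_nonneg] at hlog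
  rw [H_eq_harmonic]
  linarith [harmonic_le_one_add_log n]

lemma summable_H_sq_div_cube : Summable fun n : ℕ => H (n + 1) ^ 2 / ((n : ℝ) + 1) ^ 3 := by
  have hinv : Summable fun n : ℕ => 4 / ((n : ℝ) + 1) ^ 2 := by
    have := (summable_nat_add_iff 1).mpr (Real.summable_one_div_nat_pow.mpr one_lt_two)
    simpa [div_eq_mul_inv] using this.mul_left 4
  refine hinv.of_nonneg_of_le (fun n => by positivity) fun n => ?_
  have hH : H (n + 1) ^ 2 ≤ 4 * ((n : ℝ) + 1) := by
    have h := H_le_two_sqrt (n + 1)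
    have hsq := sq_sqrt (show (0 : ℝ) ≤ n + 1 by positivity)
    push_cast at h
    nlinarith [H_nonneg (n + 1)]
  rw [div_le_div_iff₀ (by positivity) (by positivity)]
  nlinarith [pow_pos (show (0 : ℝ) < n + 1 by positivity) 2]

lemma integral_one_sub_pow (k : ℕ) : ∫ t in (0 : ℝ)..1, (1 - t) ^ k = 1 / ((k : ℝ) + 1) := by
  simp [integral_comp_sub_left (fun x : ℝ => x ^ k)]

lemma integral_geom_sum_one_sub (n : ℕ) :
    ∫ t in (0 : ℝ)..1, ∑ k ∈ Finset.range n, (1 - t) ^ k = H n := by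
  have hint (k : ℕ) : IntervalIntegrable (fun t : ℝ => (1 - t) ^ k) volume 0 1 :=
    (by fun_prop : Continuous fun t : ℝ => (1 - t) ^ k).intervalIntegrable _ _
  rw [integral_finsetSum fun k _ => hint k, H_eq_sum_range]
  simp only [integral_one_sub_pow]

lemma intervalIntegrable_one_sub_pow_mul_log (n : ℕ) :
    IntervalIntegrable (fun t : ℝ => (1 - t) ^ n * log t) volume 0 1 :=
  intervalIntegrable_log'.continuousOn_mul (by fun_prop)

lemma integral_one_sub_pow_mul_log (n : ℕ) :
    ∫ t in (0 : ℝ)..1, (1 - t) ^ n * log t = -H (n + 1) / (n + 1) := by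
  set Q : ℝ → ℝ := fun t => ∑ k ∈ Finset.range (n + 1), (1 - t) ^ k
  have hQ (t : ℝ) : t * Q t = 1 - (1 - t) ^ (n + 1) := by
    linear_combination (-1 : ℝ) * geom_sum_mul (1 - t) (n + 1)
  have hQint : IntervalIntegrable Q volume 0 1 := (by fun_prop : Continuous Q).intervalIntegrable _ _
  -- `t log t` is continuous at `0`, and the antiderivative is `t log t · Q t`
  have hF : (fun t => (1 - (1 - t) ^ (n + 1)) * log t) = fun t => t * log t * Q t := by
    funext t; rw [← hQ]; ring
  have hcont : ContinuousOn (fun t => (1 - (1 - t) ^ (n + 1)) * log t) (Icc 0 1) := by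
    rw [hF]; fun_prop
  have hderiv : ∀ t ∈ Ioo (0 : ℝ) 1, HasDerivAt (fun t => (1 - (1 - t) ^ (n + 1)) * log t)
      ((n + 1) * ((1 - t) ^ n * log t) + Q t) t := by
    intro t ht
    refine (((((hasDerivAt_id t).const_sub 1).pow (n + 1)).const_sub 1).mul
      (hasDerivAt_log ht.1.ne')).congr_deriv ?_
    simp only [id, Pi.pow_apply, add_tsub_cancel_right, ← hQ]
    field_simp [ht.1.ne']
    push_cast
    ring
  have hFTC := integral_eq_sub_of_hasDerivAt_of_le zero_le_one hcont hderiv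
    (((intervalIntegrable_one_sub_pow_mul_log n).const_mul _).add hQint)
  rw [integral_add ((intervalIntegrable_one_sub_pow_mul_log n).const_mul _) hQint,
    intervalIntegral.integral_const_mul, integral_geom_sum_one_sub] at hFTC
  field_simp
  simp only [log_one, log_zero, mul_zero, sub_self] at hFTC
  linarith

noncomputable def logWeight (n : ℕ) (t : ℝ) : ℝ := (1 - t) ^ n * -log t

lemma logWeight_nonneg {t : ℝ} (ht : t ∈ Ioc (0 : ℝ) 1) (n : ℕ) : 0 ≤ logWeight n t :=
  mul_nonneg (pow_nonneg (sub_nonneg.2 ht.2) n) (neg_nonneg.2 (log_nonpos ht.1.le ht.2))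

lemma summable_logWeight {u : ℝ} (hu : u ∈ Ioc (0 : ℝ) 1) : Summable fun n => logWeight n u :=
  (summable_geometric_of_lt_one (sub_nonneg.2 hu.2) (by linarith [hu.1])).mul_right _

lemma integrableOn_logWeight (n : ℕ) : IntegrableOn (logWeight n) (Ioc 0 1) := by
  have h := (intervalIntegrable_iff_integrableOn_Ioc_of_le zero_le_one).1
    (intervalIntegrable_one_sub_pow_mul_log n)
  exact h.neg.congr_fun (fun t _ => (mul_neg _ _).symm) measurableSet_Ioc

lemma setIntegral_logWeight (n : ℕ) :
    ∫ t in Ioc 0 1, logWeight n t = H (n + 1) / (n + 1) := by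
  rw [← intervalIntegral.integral_of_le zero_le_one]
  simp only [logWeight, mul_neg, intervalIntegral.integral_neg, integral_one_sub_pow_mul_log]
  ring

lemma tsum_integral_eq_integral_tsum_of_nonneg {ι α : Type*} [Countable ι] [MeasurableSpace α]
    {μ : Measure α} {f : ι → α → ℝ} (hf : ∀ n, Integrable (f n) μ) (hf₀ : ∀ n, 0 ≤ᵐ[μ] f n)
    (hs : Summable fun n => ∫ a, f n a ∂μ) :
    ∑' n, ∫ a, f n a ∂μ = ∫ a, ∑' n, f n a ∂μ :=
  integral_tsum_of_summable_integral_norm hf <| hs.congr fun n =>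
    integral_congr_ae <| (hf₀ n).mono fun _ ha => (Real.norm_of_nonneg ha).symm

lemma hasSum_pow_div_succ {z : ℝ} (hz : |z| < 1) (hz₀ : z ≠ 0) :
    HasSum (fun n : ℕ => z ^ n / (n + 1)) (-log (1 - z) / z) := by
  have h := (hasSum_pow_div_log_of_abs_lt_one hz).div_const z
  rwa [show (fun n : ℕ => z ^ (n + 1) / (n + 1) / z) = fun n : ℕ => z ^ n / (n + 1) by
    funext n; field_simp; ring] at h

noncomputable def harmonicKernel (t u : ℝ) : ℝ :=
  log (1 - (1 - t) * (1 - u)) * (log t * log u) / ((1 - t) * (1 - u))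

lemma neg_harmonicKernel_eq_tsum {t u : ℝ} (ht : t ∈ Ioc (0 : ℝ) 1) (hu : u ∈ Ioc (0 : ℝ) 1) :
    -harmonicKernel t u = ∑' n : ℕ, logWeight n t * logWeight n u / (n + 1) := by
  rcases eq_or_ne ((1 - t) * (1 - u)) 0 with hz | hz
  · obtain rfl | rfl : t = 1 ∨ u = 1 := by
      rcases mul_eq_zero.1 hz with h | h
      exacts [.inl (by linarith), .inr (by linarith)]
    all_goals simp [harmonicKernel, logWeight]
  · have hz₁ : |(1 - t) * (1 - u)| < 1 := by
      rw [abs_of_nonneg (mul_nonneg (sub_nonneg.2 ht.2) (sub_nonneg.2 hu.2))]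
      nlinarith [ht.1, hu.1, ht.2, hu.2]
    calc -harmonicKernel t u
        = -log (1 - (1 - t) * (1 - u)) / ((1 - t) * (1 - u)) * (log t * log u) := by
          simp only [harmonicKernel]; ring
      _ = ∑' n : ℕ, ((1 - t) * (1 - u)) ^ n / (n + 1) * (log t * log u) :=
          ((hasSum_pow_div_succ hz₁ hz).mul_right _).tsum_eq.symm
      _ = ∑' n : ℕ, logWeight n t * logWeight n u / (n + 1) :=
          tsum_congr fun n => by simp only [logWeight, mul_pow]; ring

lemma setIntegral_neg_harmonicKernel {u : ℝ} (hu : u ∈ Ioc (0 : ℝ) 1) :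
    ∫ t in Ioc 0 1, -harmonicKernel t u = ∑' n : ℕ, H (n + 1) / (n + 1) ^ 2 * logWeight n u := by
  have hterm (n : ℕ) : ∫ t in Ioc 0 1, logWeight n t * logWeight n u / (n + 1) =
      H (n + 1) / (n + 1) ^ 2 * logWeight n u := by
    simp_rw [mul_div_assoc]
    rw [MeasureTheory.integral_mul_const, setIntegral_logWeight]
    field_simp
  have hcoeff (n : ℕ) : H (n + 1) / ((n : ℝ) + 1) ^ 2 ≤ 1 := by
    refine div_le_one_of_le₀ ?_ (by positivity)
    have := H_le_self (n + 1)
    push_cast at this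
    nlinarith
  rw [setIntegral_congr_fun measurableSet_Ioc fun t ht => neg_harmonicKernel_eq_tsum ht hu,
    ← tsum_integral_eq_integral_tsum_of_nonneg]
  · exact tsum_congr hterm
  · exact fun n => ((integrableOn_logWeight n).mul_const _).div_const _
  · exact fun n => ae_restrict_of_forall_mem measurableSet_Ioc fun t ht =>
      div_nonneg (mul_nonneg (logWeight_nonneg ht n) (logWeight_nonneg hu n)) (by positivity)
  · simp_rw [hterm]
    refine (summable_logWeight hu).of_nonneg_of_le (fun n => ?_) fun n => ?_
    · exact mul_nonneg (by have := H_nonneg (n + 1); positivity) (logWeight_nonneg hu n)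
    · exact mul_le_of_le_one_left (logWeight_nonneg hu n) (hcoeff n)

lemma setIntegral_tsum_H_mul_logWeight :
    ∫ u in Ioc 0 1, ∑' n : ℕ, H (n + 1) / (n + 1) ^ 2 * logWeight n u =
      ∑' n : ℕ, H (n + 1) ^ 2 / ((n : ℝ) + 1) ^ 3 := by
  have hterm (n : ℕ) : ∫ u in Ioc 0 1, H (n + 1) / (n + 1) ^ 2 * logWeight n u =
      H (n + 1) ^ 2 / ((n : ℝ) + 1) ^ 3 := by
    rw [MeasureTheory.integral_const_mul, setIntegral_logWeight]
    field_simp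
  rw [← tsum_integral_eq_integral_tsum_of_nonneg]
  · exact tsum_congr hterm
  · exact fun n => (integrableOn_logWeight n).const_mul _
  · exact fun n => ae_restrict_of_forall_mem measurableSet_Ioc fun u hu =>
      mul_nonneg (by have := H_nonneg (n + 1); positivity) (logWeight_nonneg hu n)
  · simpa only [hterm] using summable_H_sq_div_cube

theorem stmt_18 :
    ∑' n : ℕ, (H (n + 1)) ^ 2 / ((n : ℝ) + 1) ^ 3 =
      -∫ u in (0:ℝ)..1, ∫ t in (0:ℝ)..1,
        Real.log (1 - (1 - t) * (1 - u)) * (Real.log t * Real.log u) /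
          ((1 - t) * (1 - u)) := by
  calc ∑' n : ℕ, (H (n + 1)) ^ 2 / ((n : ℝ) + 1) ^ 3
      = ∫ u in Ioc 0 1, ∑' n : ℕ, H (n + 1) / (n + 1) ^ 2 * logWeight n u :=
        setIntegral_tsum_H_mul_logWeight.symm
    _ = ∫ u in Ioc 0 1, ∫ t in Ioc 0 1, -harmonicKernel t u :=
        setIntegral_congr_fun measurableSet_Ioc fun u hu => (setIntegral_neg_harmonicKernel hu).symm
    _ = -∫ u in (0:ℝ)..1, ∫ t in (0:ℝ)..1, harmonicKernel t u := by
        simp only [intervalIntegral.integral_of_le zero_le_one, MeasureTheory.integral_neg]
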